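/- arXiv:2303.02298 — 2 statements merged into one kernel-verified Lean document; each statement's English description precedes it below -/
import Mathlib

section
/- If the Lagrangian L(a) = U(a) + γ log π(a) is continuous in a and not constant on the support of π (i.e., there exist open sets V₁, V₂ of equal positive measure and h > 0 with L(a) - L(a') > h for a ∈ V₁, a' ∈ V₂), then the perturbed density π* obtained by shifting mass ε from V₁ to V₂ satisfies ∫L_{π*}π* da - ∫L_π π da ≤ -εh·vol(V₁) + O(ε²) < 0 for sufficiently small ε > 0; hence any optimal π makes U(a) + γ log π(a) constant in a. -/
open MeasureTheory

/-- The entropy-regularized objective `J(π) = ∫ (U(a) + γ log π(a)) π(a) da`. -/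
noncomputable def entObjJ {n : ℕ} (U : (Fin n → ℝ) → ℝ) (γ : ℝ)
    (pd : (Fin n → ℝ) → ℝ) : ℝ :=
  ∫ a : Fin n → ℝ, (U a + γ * Real.log (pd a)) * pd a

private lemma abs_log_le_two_mul {z : ℝ} (hz : 1/2 ≤ z) : |Real.log z| ≤ 2 * |z - 1| := by
  have hz0 : 0 < z := by linarith
  rcases le_or_gt 1 z with h | h
  · rw [abs_of_nonneg (Real.log_nonneg h), abs_of_nonneg (by linarith)]
    linarith [Real.log_le_sub_one_of_pos hz0]
  · rw [abs_of_nonpos (Real.log_nonpos hz0.le h.le), abs_of_neg (by linarith)]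
    have h1 : Real.log z⁻¹ ≤ z⁻¹ - 1 := Real.log_le_sub_one_of_pos (inv_pos.2 hz0)
    rw [Real.log_inv] at h1
    have h2 : z * z⁻¹ = 1 := mul_inv_cancel₀ hz0.ne'
    nlinarith

private lemma mul_log_sub_le {x y : ℝ} (hx : 0 < x) (hy : 0 < y) :
    x * Real.log x - y * Real.log y ≤ (Real.log x + 1) * (x - y) := by
  have h := Real.log_le_sub_one_of_pos (div_pos hx hy)
  rw [Real.log_div hx.ne' hy.ne'] at h
  have h2 : y * (Real.log x - Real.log y) ≤ y * (x / y - 1) :=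
    mul_le_mul_of_nonneg_left h hy.le
  have h3 : y * (x / y - 1) = x - y := by field_simp
  nlinarith [h2, h3]

private lemma integrable_aux {n : ℕ} {f g : (Fin n → ℝ) → ℝ} (hf : Continuous f)
    (hg : HasCompactSupport g) (h : ∀ a, g a = 0 → f a = 0) :
    Integrable f := by
  refine hf.integrable_of_hasCompactSupport (hg.mono' ?_)
  intro x hx
  exact subset_closure (fun h0 => hx (h x h0))

-- bump function facts
private lemma bump_facts {n : ℕ} (p : Fin n → ℝ) (r : ℝ) (hr : 0 < r) :
    Continuous (fun a : Fin n → ℝ => max (r - dist a p) 0) ∧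
    (∀ a, 0 ≤ max (r - dist a p) 0) ∧
    HasCompactSupport (fun a : Fin n → ℝ => max (r - dist a p) 0) ∧
    (∀ a : Fin n → ℝ, max (r - dist a p) 0 ≠ 0 → a ∈ Metric.ball p r) ∧
    (∀ a ∈ Metric.ball p r, 0 < max (r - dist a p) 0) := by
  refine ⟨((continuous_const.sub (continuous_id.dist continuous_const)).max continuous_const),
    fun a => le_max_right _ _, ?_, ?_, ?_⟩
  · refine HasCompactSupport.intro (isCompact_closedBall p r) (fun x hx => ?_)
    simp only [Metric.mem_closedBall, not_le] at hx
    exact max_eq_right (by linarith)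
  · intro a ha
    by_contra hb
    simp only [Metric.mem_ball, not_lt] at hb
    exact ha (max_eq_right (by linarith))
  · intro a ha
    simp only [Metric.mem_ball] at ha
    exact lt_max_of_lt_left (by linarith)

private lemma no_gap {n : ℕ}
    (U : (Fin n → ℝ) → ℝ) (hU : Continuous U) (γ : ℝ) (hγ : 0 < γ)
    (pd : (Fin n → ℝ) → ℝ) (hpd_cont : Continuous pd) (hpd_pos : ∀ a, 0 < pd a)
    (hpd_prob : (∫ a : Fin n → ℝ, pd a) = 1)
    (hpd_int : Integrable (fun a => (U a + γ * Real.log (pd a)) * pd a))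
    (hopt : ∀ ρ : (Fin n → ℝ) → ℝ, Continuous ρ → (∀ a, 0 < ρ a) →
        (∫ a : Fin n → ℝ, ρ a) = 1 →
        Integrable (fun a => (U a + γ * Real.log (ρ a)) * ρ a) →
        entObjJ U γ pd ≤ entObjJ U γ ρ)
    (p q : Fin n → ℝ)
    (hpq : U q + γ * Real.log (pd q) < U p + γ * Real.log (pd p)) : False := by
  set L : (Fin n → ℝ) → ℝ := fun a => U a + γ * Real.log (pd a) with hL
  have hLcont : Continuous L :=
    hU.add (continuous_const.mul (hpd_cont.log (fun a => (hpd_pos a).ne')))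
  have hpq' : L q < L p := hpq
  set mid : ℝ := (L p + L q) / 2 with hmid
  set δ : ℝ := (L p - L q) / 4 with hδdef
  have hδ : 0 < δ := by simp only [hδdef]; linarith
  -- open sets where L is large / small
  obtain ⟨r₀, hr₀, hball₀⟩ := Metric.isOpen_iff.mp
    (isOpen_lt continuous_const hLcont : IsOpen {a | mid + δ < L a}) p (by
      simp only [Set.mem_setOf_eq, hmid, hδdef]; linarith)
  obtain ⟨r₁, hr₁, hball₁⟩ := Metric.isOpen_iff.mp
    (isOpen_lt hLcont continuous_const : IsOpen {a | L a < mid - δ}) q (by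
      simp only [Set.mem_setOf_eq, hmid, hδdef]; linarith)
  -- bump functions
  obtain ⟨hφ₀c, hφ₀nn, hφ₀cs, hφ₀supp, hφ₀pos⟩ := bump_facts p r₀ hr₀
  obtain ⟨hφ₁c, hφ₁nn, hφ₁cs, hφ₁supp, hφ₁pos⟩ := bump_facts q r₁ hr₁
  set φ₀ : (Fin n → ℝ) → ℝ := fun a => max (r₀ - dist a p) 0 with hφ₀
  set φ₁ : (Fin n → ℝ) → ℝ := fun a => max (r₁ - dist a q) 0 with hφ₁
  -- dominating compact support function
  set ψ : (Fin n → ℝ) → ℝ := fun a => φ₀ a + φ₁ a with hψ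
  have hψcs : HasCompactSupport ψ := hφ₀cs.add hφ₁cs
  have hψ0 : ∀ a, ψ a = 0 → φ₀ a = 0 ∧ φ₁ a = 0 := by
    intro a ha
    simp only [hψ] at ha
    constructor <;> linarith [hφ₀nn a, hφ₁nn a]
  have int_aux : ∀ f : (Fin n → ℝ) → ℝ, Continuous f →
      (∀ a, φ₀ a = 0 → φ₁ a = 0 → f a = 0) → Integrable f := by
    intro f hf h
    exact integrable_aux hf hψcs (fun a ha => h a (hψ0 a ha).1 (hψ0 a ha).2)
  -- normalization constants
  set c₀ : ℝ := ∫ a, φ₀ a * pd a with hc₀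
  set c₁ : ℝ := ∫ a, φ₁ a * pd a with hc₁
  have int_φ₀pd : Integrable (fun a => φ₀ a * pd a) :=
    int_aux _ (hφ₀c.mul hpd_cont) (fun a h0 _ => by simp [h0])
  have int_φ₁pd : Integrable (fun a => φ₁ a * pd a) :=
    int_aux _ (hφ₁c.mul hpd_cont) (fun a _ h1 => by simp [h1])
  have hc₀pos : 0 < c₀ := by
    rw [hc₀, integral_pos_iff_support_of_nonneg
      (fun a => mul_nonneg (hφ₀nn a) (hpd_pos a).le) int_φ₀pd]
    refine lt_of_lt_of_le (Metric.measure_ball_pos volume p hr₀) (measure_mono ?_)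
    intro a ha
    exact mul_ne_zero (ne_of_gt (hφ₀pos a ha)) (hpd_pos a).ne'
  have hc₁pos : 0 < c₁ := by
    rw [hc₁, integral_pos_iff_support_of_nonneg
      (fun a => mul_nonneg (hφ₁nn a) (hpd_pos a).le) int_φ₁pd]
    refine lt_of_lt_of_le (Metric.measure_ball_pos volume q hr₁) (measure_mono ?_)
    intro a ha
    exact mul_ne_zero (ne_of_gt (hφ₁pos a ha)) (hpd_pos a).ne'
  -- the perturbation direction g
  set g : (Fin n → ℝ) → ℝ := fun a => φ₀ a / c₀ - φ₁ a / c₁ with hg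
  have hgcont : Continuous g := (hφ₀c.div_const _).sub (hφ₁c.div_const _)
  have hgzero : ∀ a, φ₀ a = 0 → φ₁ a = 0 → g a = 0 := by
    intro a h0 h1; simp [hg, h0, h1]
  have hgcs : HasCompactSupport g := by
    refine hψcs.mono' (fun x hx => subset_closure (fun h0 => hx ?_))
    exact hgzero x (hψ0 x h0).1 (hψ0 x h0).2
  have int_gpd : Integrable (fun a => g a * pd a) :=
    int_aux _ (hgcont.mul hpd_cont) (fun a h0 h1 => by simp [hgzero a h0 h1])
  have hgpd : (∫ a, g a * pd a) = 0 := by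
    have heq : (fun a => g a * pd a)
        = fun a => (φ₀ a * pd a) / c₀ - (φ₁ a * pd a) / c₁ := by
      funext a; simp only [hg]; ring
    rw [heq, integral_sub (int_φ₀pd.div_const _) (int_φ₁pd.div_const _),
      integral_div, integral_div, ← hc₀, ← hc₁,
      div_self hc₀pos.ne', div_self hc₁pos.ne', sub_self]
  -- the first-order coefficient c' = ∫ L g pd ≥ 2δ
  set c' : ℝ := ∫ a, L a * (g a * pd a) with hc'
  have int_Lgpd : Integrable (fun a => L a * (g a * pd a)) :=
    int_aux _ (hLcont.mul (hgcont.mul hpd_cont))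
      (fun a h0 h1 => by simp [hgzero a h0 h1])
  have int_Lmidφ₀ : Integrable (fun a => (L a - mid) * (φ₀ a * pd a)) :=
    int_aux _ ((hLcont.sub continuous_const).mul (hφ₀c.mul hpd_cont))
      (fun a h0 _ => by simp [h0])
  have int_Lmidφ₁ : Integrable (fun a => (L a - mid) * (φ₁ a * pd a)) :=
    int_aux _ ((hLcont.sub continuous_const).mul (hφ₁c.mul hpd_cont))
      (fun a _ h1 => by simp [h1])
  have i0 : δ * c₀ ≤ ∫ a, (L a - mid) * (φ₀ a * pd a) := by
    rw [hc₀, ← integral_const_mul]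
    refine integral_mono (int_φ₀pd.const_mul δ) int_Lmidφ₀ (fun a => ?_)
    rcases eq_or_ne (φ₀ a) 0 with h0 | h0
    · simp [h0]
    · have := hball₀ (hφ₀supp a h0)
      simp only [Set.mem_setOf_eq] at this
      exact mul_le_mul_of_nonneg_right (by linarith)
        (mul_nonneg (hφ₀nn a) (hpd_pos a).le)
  have i1 : (∫ a, (L a - mid) * (φ₁ a * pd a)) ≤ (-δ) * c₁ := by
    rw [hc₁, ← integral_const_mul]
    refine integral_mono int_Lmidφ₁ (int_φ₁pd.const_mul (-δ)) (fun a => ?_)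
    rcases eq_or_ne (φ₁ a) 0 with h1 | h1
    · simp [h1]
    · have := hball₁ (hφ₁supp a h1)
      simp only [Set.mem_setOf_eq] at this
      exact mul_le_mul_of_nonneg_right (by linarith)
        (mul_nonneg (hφ₁nn a) (hpd_pos a).le)
  have hc'ge : 2 * δ ≤ c' := by
    have heq : (fun a => L a * (g a * pd a))
        = fun a => ((L a - mid) * (φ₀ a * pd a)) / c₀
          - ((L a - mid) * (φ₁ a * pd a)) / c₁ + mid * (g a * pd a) := by
      funext a
      simp only [hg]
      field_simp
      ring
    have I1 : Integrable (fun a => (L a - mid) * (φ₀ a * pd a) / c₀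
        - (L a - mid) * (φ₁ a * pd a) / c₁) :=
      (int_Lmidφ₀.div_const c₀).sub (int_Lmidφ₁.div_const c₁)
    rw [hc', heq, integral_add I1 (int_gpd.const_mul mid),
      integral_sub (int_Lmidφ₀.div_const _) (int_Lmidφ₁.div_const _),
      integral_div, integral_div, integral_const_mul, hgpd, mul_zero, add_zero]
    have h0 : δ ≤ (∫ a, (L a - mid) * (φ₀ a * pd a)) / c₀ :=
      (le_div_iff₀ hc₀pos).2 (by linarith)
    have h1 : (∫ a, (L a - mid) * (φ₁ a * pd a)) / c₁ ≤ -δ :=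
      (div_le_iff₀ hc₁pos).2 (by linarith)
    linarith
  -- bound on g
  obtain ⟨M₀, hM₀⟩ := hgcs.exists_bound_of_continuous hgcont
  set M : ℝ := M₀ + 1 with hMdef
  have hMpos : 0 < M := by
    have := hM₀ p
    have := norm_nonneg (g p)
    simp only [hMdef]; linarith
  have hM : ∀ a, |g a| ≤ M := by
    intro a
    have := hM₀ a
    rw [Real.norm_eq_abs] at this
    simp only [hMdef]; linarith
  -- second order constant
  set C : ℝ := ∫ a, g a ^ 2 * pd a with hC
  have int_g2pd : Integrable (fun a => g a ^ 2 * pd a) :=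
    int_aux _ ((hgcont.pow 2).mul hpd_cont) (fun a h0 h1 => by simp [hgzero a h0 h1])
  have hCnn : 0 ≤ C :=
    integral_nonneg (fun a => mul_nonneg (sq_nonneg _) (hpd_pos a).le)
  -- step size
  set s : ℝ := min (1 / (2 * M)) (δ / (2 * γ * C + 1)) with hs
  have hden : 0 < 2 * γ * C + 1 := by nlinarith
  have hspos : 0 < s :=
    lt_min (by positivity) (div_pos hδ hden)
  have hs1 : ∀ a, s * |g a| ≤ 1 / 2 := by
    intro a
    have h1 : s * |g a| ≤ (1 / (2 * M)) * M :=
      mul_le_mul (min_le_left _ _) (hM a) (abs_nonneg _) (by positivity)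
    have h2 : (1 / (2 * M)) * M = 1 / 2 := by field_simp
    linarith
  have hs2 : s * (2 * γ * C + 1) ≤ δ :=
    (le_div_iff₀ hden).1 (min_le_right _ _)
  have hfac : ∀ a, 1 / 2 ≤ 1 - s * g a := by
    intro a
    have h3 : s * g a ≤ 1 / 2 :=
      (mul_le_mul_of_nonneg_left (le_abs_self _) hspos.le).trans (hs1 a)
    linarith only [h3]
  -- the perturbed density
  set ρ : (Fin n → ℝ) → ℝ := fun a => pd a * (1 - s * g a) with hρ
  have hρcont : Continuous ρ :=
    hpd_cont.mul (continuous_const.sub (continuous_const.mul hgcont))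
  have hρpos : ∀ a, 0 < ρ a := by
    intro a
    simp only [hρ]
    exact mul_pos (hpd_pos a) (lt_of_lt_of_le one_half_pos (hfac a))
  have hpd_integrable : Integrable pd := by
    by_contra hni
    rw [integral_undef hni] at hpd_prob
    norm_num at hpd_prob
  have hρprob : (∫ a, ρ a) = 1 := by
    have heq : (fun a => ρ a) = fun a => pd a - s * (g a * pd a) := by
      funext a; simp only [hρ]; ring
    rw [heq, integral_sub hpd_integrable (int_gpd.const_mul s),
      integral_const_mul, hgpd, hpd_prob, mul_zero, sub_zero]
  -- log of ρ
  have hlogρ : ∀ a, Real.log (ρ a) = Real.log (pd a) + Real.log (1 - s * g a) := by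
    intro a
    simp only [hρ]
    exact Real.log_mul (hpd_pos a).ne'
      (ne_of_gt (lt_of_lt_of_le one_half_pos (hfac a)))
  -- the difference of integrands
  set diff : (Fin n → ℝ) → ℝ :=
    fun a => (U a + γ * Real.log (ρ a)) * ρ a - (U a + γ * Real.log (pd a)) * pd a
    with hdiff
  have hdiffzero : ∀ a, φ₀ a = 0 → φ₁ a = 0 → diff a = 0 := by
    intro a h0 h1
    simp only [hdiff, hρ, hgzero a h0 h1, mul_zero, sub_zero, mul_one, sub_self]
  have hdiffcont : Continuous diff :=
    ((hU.add (continuous_const.mul (hρcont.log (fun a => (hρpos a).ne')))).mul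
      hρcont).sub
      ((hU.add (continuous_const.mul (hpd_cont.log (fun a => (hpd_pos a).ne')))).mul
        hpd_cont)
  have int_diff : Integrable diff := int_aux _ hdiffcont hdiffzero
  -- integrability of the perturbed objective
  have hρint : Integrable (fun a => (U a + γ * Real.log (ρ a)) * ρ a) := by
    have heq : (fun a => (U a + γ * Real.log (ρ a)) * ρ a)
        = fun a => (U a + γ * Real.log (pd a)) * pd a + diff a := by
      funext a; simp only [hdiff]; ring
    rw [heq]
    exact hpd_int.add int_diff
  -- optimality gives 0 ≤ ∫ diff
  have hopt' := hopt ρ hρcont hρpos hρprob hρint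
  have hJdiff : (0 : ℝ) ≤ ∫ a, diff a := by
    have heq : (∫ a, diff a)
        = (∫ a, (U a + γ * Real.log (ρ a)) * ρ a)
          - ∫ a, (U a + γ * Real.log (pd a)) * pd a := by
      simp only [hdiff]
      exact integral_sub hρint hpd_int
    rw [heq]
    simp only [entObjJ] at hopt'
    linarith
  -- upper bound function B
  have hlogcont : Continuous (fun a => Real.log (1 - s * g a)) :=
    (continuous_const.sub (continuous_const.mul hgcont)).log
      (fun a => ne_of_gt (lt_of_lt_of_le one_half_pos (hfac a)))
  set B : (Fin n → ℝ) → ℝ := fun a =>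
    (-s) * (L a * (g a * pd a)) + (-(s * γ)) * (Real.log (1 - s * g a) * (g a * pd a))
      + (-(s * γ)) * (g a * pd a) with hB
  have hBcont : Continuous B := by
    refine Continuous.add (Continuous.add ?_ ?_) ?_
    · exact continuous_const.mul (hLcont.mul (hgcont.mul hpd_cont))
    · exact continuous_const.mul (hlogcont.mul (hgcont.mul hpd_cont))
    · exact continuous_const.mul (hgcont.mul hpd_cont)
  have int_B : Integrable B :=
    int_aux _ hBcont (fun a h0 h1 => by simp [hB, hgzero a h0 h1])
  have int_loggpd : Integrable (fun a => Real.log (1 - s * g a) * (g a * pd a)) :=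
    int_aux _ (hlogcont.mul (hgcont.mul hpd_cont))
      (fun a h0 h1 => by simp [hgzero a h0 h1])
  -- pointwise bound diff ≤ B
  have hpoint : ∀ a, diff a ≤ B a := by
    intro a
    have h1 := mul_log_sub_le (hρpos a) (hpd_pos a)
    rw [hlogρ a] at h1
    have h4 := mul_le_mul_of_nonneg_left h1 hγ.le
    simp only [hρ] at h4
    simp only [hdiff, hB, hρ, hL]
    rw [Real.log_mul (hpd_pos a).ne'
      (ne_of_gt (lt_of_lt_of_le one_half_pos (hfac a)))]
    linarith only [h4]
  have h5 : (∫ a, diff a) ≤ ∫ a, B a := integral_mono int_diff int_B hpoint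
  -- compute ∫ B
  set E : ℝ := ∫ a, Real.log (1 - s * g a) * (g a * pd a) with hE
  have hintB : (∫ a, B a) = (-s) * c' + (-(s * γ)) * E := by
    have I2 : Integrable (fun a =>
        (-s) * (L a * (g a * pd a))
          + (-(s * γ)) * (Real.log (1 - s * g a) * (g a * pd a))) :=
      (int_Lgpd.const_mul _).add (int_loggpd.const_mul _)
    simp only [hB]
    rw [integral_add I2 (int_gpd.const_mul _),
      integral_add (int_Lgpd.const_mul _) (int_loggpd.const_mul _),
      integral_const_mul, integral_const_mul, integral_const_mul, hgpd, ← hc', ← hE]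
    ring
  -- lower bound on E
  have hElb : -(2 * s * C) ≤ E := by
    have hpoint2 : ∀ a, (-(2 * s)) * (g a ^ 2 * pd a)
        ≤ Real.log (1 - s * g a) * (g a * pd a) := by
      intro a
      have hlb : |Real.log (1 - s * g a)| ≤ 2 * (s * |g a|) := by
        have h6 := abs_log_le_two_mul (hfac a)
        have h7 : |1 - s * g a - 1| = s * |g a| := by
          rw [show (1 : ℝ) - s * g a - 1 = -(s * g a) by ring, abs_neg, abs_mul,
            abs_of_nonneg hspos.le]
        rw [h7] at h6
        exact h6
      have habs : |Real.log (1 - s * g a) * (g a * pd a)| ≤ 2 * s * (g a ^ 2 * pd a) := by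
        rw [abs_mul, abs_mul, abs_of_nonneg (hpd_pos a).le]
        calc |Real.log (1 - s * g a)| * (|g a| * pd a)
            ≤ (2 * (s * |g a|)) * (|g a| * pd a) :=
              mul_le_mul_of_nonneg_right hlb
                (mul_nonneg (abs_nonneg _) (hpd_pos a).le)
          _ = 2 * s * (|g a| ^ 2 * pd a) := by ring
          _ = 2 * s * (g a ^ 2 * pd a) := by rw [sq_abs]
      have h8 := neg_abs_le (Real.log (1 - s * g a) * (g a * pd a))
      have h9 : (-(2 * s)) * (g a ^ 2 * pd a)
          = -(2 * s * (g a ^ 2 * pd a)) := by ring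
      rw [h9]
      linarith only [habs, h8]
    have heq2 : -(2 * s * C) = ∫ a, (-(2 * s)) * (g a ^ 2 * pd a) := by
      rw [integral_const_mul, ← hC]; ring
    rw [hE, heq2]
    exact integral_mono (int_g2pd.const_mul _) int_loggpd hpoint2
  -- final contradiction
  have k0 : 0 ≤ (-s) * c' + (-(s * γ)) * E := by
    rw [← hintB]
    linarith only [hJdiff, h5]
  have k1 : s * (2 * δ) ≤ s * c' := mul_le_mul_of_nonneg_left hc'ge hspos.le
  have k2 : s * γ * (-E) ≤ s * γ * (2 * s * C) :=
    mul_le_mul_of_nonneg_left (by linarith only [hElb])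
      (mul_nonneg hspos.le hγ.le)
  have k3 : s * (s * (2 * γ * C + 1)) ≤ s * δ := mul_le_mul_of_nonneg_left hs2 hspos.le
  have k4 : 0 < s * δ := mul_pos hspos hδ
  have k5 : 0 < s * s := mul_pos hspos hspos
  linarith only [k0, k1, k2, k3, k4, k5]


/-- If the Lagrangian `L(a) = U(a) + γ log π(a)` of an optimal density were not
constant, mass could be shifted from a high-`L` region `V₁` to a low-`L` region `V₂`
of equal volume, strictly decreasing the objective to first order in `ε`;
hence any optimal density makes `U(a) + γ log π(a)` constant in `a`. -/
theorem optimal_policy_has_constant_lagrangian {n : ℕ}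
    (U : (Fin n → ℝ) → ℝ) (hU : Continuous U) (γ : ℝ) (hγ : 0 < γ)
    (pd : (Fin n → ℝ) → ℝ) (hpd_cont : Continuous pd) (hpd_pos : ∀ a, 0 < pd a)
    (hpd_prob : (∫ a : Fin n → ℝ, pd a) = 1)
    (hpd_int : Integrable (fun a => (U a + γ * Real.log (pd a)) * pd a))
    (hopt : ∀ ρ : (Fin n → ℝ) → ℝ, Continuous ρ → (∀ a, 0 < ρ a) →
        (∫ a : Fin n → ℝ, ρ a) = 1 →
        Integrable (fun a => (U a + γ * Real.log (ρ a)) * ρ a) →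
        entObjJ U γ pd ≤ entObjJ U γ ρ) :
    ∃ c : ℝ, ∀ a, U a + γ * Real.log (pd a) = c := by
  by_contra hcon
  push_neg at hcon
  obtain ⟨b, hb⟩ := hcon (U (fun _ => 0) + γ * Real.log (pd (fun _ => 0)))
  rcases lt_or_gt_of_ne hb with h | h
  · exact no_gap U hU γ hγ pd hpd_cont hpd_pos hpd_prob hpd_int hopt
      (fun _ => 0) b h
  · exact no_gap U hU γ hγ pd hpd_cont hpd_pos hpd_prob hpd_int hopt
      b (fun _ => 0) h
end

section
/- The distance d_Λ(X_t, Y_s) = ‖X_{t,s-t} - Y_s‖_∞ + (s - t) (for t ≤ s, where X_{t,s-t} denotes the flat extension of X_t to [0,s]) defines a metric on the space Λ of càdlàg paths with varying endpoints: it is nonnegative, vanishes iff the paths coincide (same horizon and equal pointwise), is symmetric, and satisfies the triangle inequality. -/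
open Set

/-- A càdlàg (right-continuous with left limits) real path. -/
def Cadlag (f : ℝ → ℝ) : Prop :=
  (∀ x, ContinuousWithinAt f (Ici x) x) ∧
    ∀ x, ∃ l, Filter.Tendsto f (nhdsWithin x (Iio x)) (nhds l)

/-- Flat extension `X_{t,·}`: freeze the path at its time-`t` value after time `t`. -/
noncomputable def flatExt (t : ℝ) (X : ℝ → ℝ) : ℝ → ℝ := fun u => if u < t then X u else X t

/-- Dupire's distance on the space of paths with varying horizons:
`d_Λ((t,X),(s,Y)) = ‖X_{t,s-t} - Y_s‖_∞ + |s - t|`. -/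
noncomputable def dLambda (t : ℝ) (X : ℝ → ℝ) (s : ℝ) (Y : ℝ → ℝ) : ℝ :=
  (⨆ u : Icc (0 : ℝ) (max t s), |flatExt t X u - flatExt s Y u|) + |s - t|

/-! The supremum in `dLambda` is finite because a càdlàg path has one-sided limits everywhere,
hence is locally bounded, hence bounded on compacts; and since both flat extensions are constant
after time `max t s`, that supremum may be evaluated at any `u ≥ 0`, which gives the triangle
inequality pointwise. -/

open Bornology Filter Topology

/-- The sup-norm part `‖X_{t,·} - Y_{s,·}‖_∞` of `dLambda`. -/
noncomputable def flatSupDist (t : ℝ) (X : ℝ → ℝ) (s : ℝ) (Y : ℝ → ℝ) : ℝ :=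
  ⨆ u : Icc (0 : ℝ) (max t s), |flatExt t X u - flatExt s Y u|

lemma dLambda_eq_flatSupDist_add (t : ℝ) (X : ℝ → ℝ) (s : ℝ) (Y : ℝ → ℝ) :
    dLambda t X s Y = flatSupDist t X s Y + |s - t| := rfl

namespace Cadlag

variable {f : ℝ → ℝ}

lemma exists_mem_nhds_isBounded_image (hf : Cadlag f) (x : ℝ) :
    ∃ t ∈ 𝓝 x, IsBounded (f '' t) := by
  obtain ⟨l, hl⟩ := hf.2 x
  obtain ⟨s₁, hs₁, hb₁⟩ := Metric.exists_isBounded_image_of_tendsto hl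
  obtain ⟨s₂, hs₂, hb₂⟩ := Metric.exists_isBounded_image_of_tendsto (hf.1 x)
  refine ⟨s₁ ∪ s₂, ?_, by simpa only [image_union] using hb₁.union hb₂⟩
  rw [← nhdsLT_sup_nhdsGE x]
  exact ⟨mem_of_superset hs₁ subset_union_left, mem_of_superset hs₂ subset_union_right⟩

lemma isBounded_image (hf : Cadlag f) {K : Set ℝ} (hK : IsCompact K) : IsBounded (f '' K) :=
  isBounded_image_of_isLocallyBounded_of_isCompact hK hf.exists_mem_nhds_isBounded_image

end Cadlag

section flatExt

variable {t u : ℝ} {X : ℝ → ℝ}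

lemma flatExt_apply_of_le (h : u ≤ t) : flatExt t X u = X u := by
  rcases h.lt_or_eq with h | rfl
  · simp [flatExt, h]
  · simp [flatExt]

lemma flatExt_apply_of_ge (h : t ≤ u) : flatExt t X u = X t := by
  simp [flatExt, not_lt.2 h]

lemma flatExt_min_of_le {m : ℝ} (h : t ≤ m) : flatExt t X (min u m) = flatExt t X u := by
  rcases le_total u m with hum | hmu
  · rw [min_eq_left hum]
  · rw [min_eq_right hmu, flatExt_apply_of_ge h, flatExt_apply_of_ge (h.trans hmu)]

lemma Cadlag.isBounded_flatExt_image_Icc (hX : Cadlag X) {a b : ℝ} (ht : t ∈ Icc a b) :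
    IsBounded (flatExt t X '' Icc a b) := by
  refine (hX.isBounded_image (isCompact_Icc (a := a) (b := b))).subset ?_
  rintro _ ⟨u, hu, rfl⟩
  unfold flatExt
  split_ifs
  exacts [mem_image_of_mem X hu, mem_image_of_mem X ht]

end flatExt

section flatSupDist

variable {t s r : ℝ} {X Y Z : ℝ → ℝ}

lemma flatSupDist_nonneg : 0 ≤ flatSupDist t X s Y :=
  Real.iSup_nonneg fun _ => abs_nonneg _

lemma flatSupDist_comm : flatSupDist t X s Y = flatSupDist s Y t X := by
  rw [flatSupDist, flatSupDist, max_comm s t]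
  exact iSup_congr fun _ => abs_sub_comm _ _

lemma bddAbove_range_abs_flatExt_sub (hX : Cadlag X) (hY : Cadlag Y) (ht : 0 ≤ t) (hs : 0 ≤ s) :
    BddAbove (range fun u : Icc (0 : ℝ) (max t s) => |flatExt t X u - flatExt s Y u|) := by
  obtain ⟨C, hC⟩ := Metric.isBounded_iff.1
    ((hX.isBounded_flatExt_image_Icc ⟨ht, le_max_left t s⟩).union
      (hY.isBounded_flatExt_image_Icc ⟨hs, le_max_right t s⟩))
  refine ⟨C, forall_mem_range.2 fun u => ?_⟩
  simpa only [Real.dist_eq] using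
    hC (Or.inl (mem_image_of_mem _ u.2)) (Or.inr (mem_image_of_mem _ u.2))

lemma abs_flatExt_sub_le_flatSupDist (hX : Cadlag X) (hY : Cadlag Y) (ht : 0 ≤ t) (hs : 0 ≤ s)
    {u : ℝ} (hu : 0 ≤ u) : |flatExt t X u - flatExt s Y u| ≤ flatSupDist t X s Y := by
  have hmem : min u (max t s) ∈ Icc (0 : ℝ) (max t s) :=
    ⟨le_min hu (le_max_of_le_left ht), min_le_right _ _⟩
  rw [← flatExt_min_of_le (le_max_left t s), ← flatExt_min_of_le (le_max_right t s)]
  exact le_ciSup (bddAbove_range_abs_flatExt_sub hX hY ht hs) ⟨_, hmem⟩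

lemma flatSupDist_triangle (hX : Cadlag X) (hY : Cadlag Y) (hZ : Cadlag Z) (ht : 0 ≤ t)
    (hs : 0 ≤ s) (hr : 0 ≤ r) :
    flatSupDist t X r Z ≤ flatSupDist t X s Y + flatSupDist s Y r Z := by
  have : Nonempty (Icc (0 : ℝ) (max t r)) := ⟨⟨0, le_rfl, le_max_of_le_left ht⟩⟩
  refine ciSup_le fun u => (abs_sub_le _ (flatExt s Y u) _).trans ?_
  exact add_le_add (abs_flatExt_sub_le_flatSupDist hX hY ht hs u.2.1)
    (abs_flatExt_sub_le_flatSupDist hY hZ hs hr u.2.1)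

lemma flatSupDist_self_eq_zero_iff (hX : Cadlag X) (hY : Cadlag Y) (ht : 0 ≤ t) :
    flatSupDist t X t Y = 0 ↔ ∀ u ∈ Icc 0 t, X u = Y u := by
  constructor
  · intro h u hu
    have hle := abs_flatExt_sub_le_flatSupDist hX hY ht ht hu.1
    rw [h, abs_nonpos_iff, sub_eq_zero, flatExt_apply_of_le hu.2, flatExt_apply_of_le hu.2] at hle
    exact hle
  · intro h
    have hterm : ∀ u : Icc (0 : ℝ) (max t t), |flatExt t X u - flatExt t Y u| = 0 := by
      rintro ⟨u, hu₀, hut⟩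
      rw [max_self] at hut
      rw [flatExt_apply_of_le hut, flatExt_apply_of_le hut, h u ⟨hu₀, hut⟩, sub_self, abs_zero]
    simp only [flatSupDist, hterm, Real.iSup_const_zero]

end flatSupDist

section dLambda

variable {t s r : ℝ} {X Y Z : ℝ → ℝ}

lemma dLambda_nonneg : 0 ≤ dLambda t X s Y :=
  add_nonneg flatSupDist_nonneg (abs_nonneg _)

lemma dLambda_comm : dLambda t X s Y = dLambda s Y t X := by
  rw [dLambda_eq_flatSupDist_add, dLambda_eq_flatSupDist_add, flatSupDist_comm, abs_sub_comm]

lemma dLambda_eq_zero_iff (hX : Cadlag X) (hY : Cadlag Y) (ht : 0 ≤ t) :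
    dLambda t X s Y = 0 ↔ t = s ∧ ∀ u ∈ Icc 0 t, X u = Y u := by
  rw [dLambda_eq_flatSupDist_add, add_eq_zero_iff_of_nonneg flatSupDist_nonneg (abs_nonneg _),
    abs_eq_zero, sub_eq_zero, and_comm, eq_comm (a := s)]
  refine and_congr_right fun hts => ?_
  subst hts
  exact flatSupDist_self_eq_zero_iff hX hY ht

lemma dLambda_triangle (hX : Cadlag X) (hY : Cadlag Y) (hZ : Cadlag Z) (ht : 0 ≤ t) (hs : 0 ≤ s)
    (hr : 0 ≤ r) : dLambda t X r Z ≤ dLambda t X s Y + dLambda s Y r Z := by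
  simp only [dLambda_eq_flatSupDist_add]
  linarith [flatSupDist_triangle hX hY hZ ht hs hr, abs_sub_le r s t]

end dLambda

theorem dLambda_is_metric_general (T : ℝ) :
    (∀ t s : ℝ, t ∈ Icc 0 T → s ∈ Icc 0 T → ∀ X Y : ℝ → ℝ,
        Cadlag X → Cadlag Y → 0 ≤ dLambda t X s Y) ∧
    (∀ t s : ℝ, t ∈ Icc 0 T → s ∈ Icc 0 T → ∀ X Y : ℝ → ℝ,
        Cadlag X → Cadlag Y →
        (dLambda t X s Y = 0 ↔ t = s ∧ ∀ u ∈ Icc 0 t, X u = Y u)) ∧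
    (∀ t s : ℝ, t ∈ Icc 0 T → s ∈ Icc 0 T → ∀ X Y : ℝ → ℝ,
        Cadlag X → Cadlag Y → dLambda t X s Y = dLambda s Y t X) ∧
    (∀ t s r : ℝ, t ∈ Icc 0 T → s ∈ Icc 0 T → r ∈ Icc 0 T →
        ∀ X Y Z : ℝ → ℝ, Cadlag X → Cadlag Y → Cadlag Z →
        dLambda t X r Z ≤ dLambda t X s Y + dLambda s Y r Z) :=
  ⟨fun _ _ _ _ _ _ _ _ => dLambda_nonneg,
    fun _ _ ht _ _ _ hX hY => dLambda_eq_zero_iff hX hY ht.1,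
    fun _ _ _ _ _ _ _ _ => dLambda_comm,
    fun _ _ _ ht hs hr _ _ _ hX hY hZ => dLambda_triangle hX hY hZ ht.1 hs.1 hr.1⟩

theorem dLambda_is_metric (T : ℝ) (hT : 0 < T) :
    (∀ t s : ℝ, t ∈ Icc 0 T → s ∈ Icc 0 T → ∀ X Y : ℝ → ℝ,
        Cadlag X → Cadlag Y → 0 ≤ dLambda t X s Y) ∧
    (∀ t s : ℝ, t ∈ Icc 0 T → s ∈ Icc 0 T → ∀ X Y : ℝ → ℝ,
        Cadlag X → Cadlag Y →
        (dLambda t X s Y = 0 ↔ t = s ∧ ∀ u ∈ Icc 0 t, X u = Y u)) ∧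
    (∀ t s : ℝ, t ∈ Icc 0 T → s ∈ Icc 0 T → ∀ X Y : ℝ → ℝ,
        Cadlag X → Cadlag Y → dLambda t X s Y = dLambda s Y t X) ∧
    (∀ t s r : ℝ, t ∈ Icc 0 T → s ∈ Icc 0 T → r ∈ Icc 0 T →
        ∀ X Y Z : ℝ → ℝ, Cadlag X → Cadlag Y → Cadlag Z →
        dLambda t X r Z ≤ dLambda t X s Y + dLambda s Y r Z) :=
  dLambda_is_metric_general T
end
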